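/- Let δ_1, …, δ_M be real numbers with δ_m > 0 for every m and Σ_{m=1}^M δ_m = 1, let P_1, …, P_M ≥ 0 with P̄ := Σ_{m=1}^M δ_m P_m > 0, let α ∈ ℂ and τ > 0, and define ν_m := δ_m · (|α|² P_m / P̄ + τ) / (|α|² + τ) for each m (so each ν_m > 0). Then Σ_{m=1}^M δ_m · log(1 + |α|² P_m / (τ P̄)) = log(1 + |α|²/τ) − Σ_{m=1}^M δ_m · log(δ_m / ν_m). -/

import Mathlib

open Finset Real

/-! With `x_m = |α|² P_m / P̄ + τ`, each summand on the left is `log (x_m / τ)`, while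
`δ_m / ν_m = (|α|² + τ) / x_m`. Hence
`log (x_m / τ) = log ((|α|² + τ) / τ) - log (δ_m / ν_m)`, and averaging over the
weights `δ_m`, whose total is `1`, gives the identity. -/

theorem Real.log_div_eq_log_div_sub_log_div {x y c : ℝ} (hx : x ≠ 0) (hy : y ≠ 0)
    (hc : c ≠ 0) : log (x / c) = log (y / c) - log (y / x) := by
  rw [log_div hx hc, log_div hy hc, log_div hy hx]
  ring

theorem Real.sum_mul_log_div_eq {ι : Type*} [Fintype ι] {w x : ι → ℝ} {y c : ℝ}
    (hw : ∑ i, w i = 1) (hx : ∀ i, x i ≠ 0) (hy : y ≠ 0) (hc : c ≠ 0) :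
    ∑ i, w i * log (x i / c) = log (y / c) - ∑ i, w i * log (y / x i) := by
  simp_rw [log_div_eq_log_div_sub_log_div (hx _) hy hc, mul_sub, sum_sub_distrib,
    ← sum_mul, hw, one_mul]

theorem rate_no_noise_general (M : ℕ) (δ : Fin M → ℝ) (hδ : ∀ m, 0 < δ m)
    (hδsum : ∑ m, δ m = 1) (P : Fin M → ℝ) (hP : ∀ m, 0 ≤ P m)
    (Pbar : ℝ) (hPbar_pos : 0 < Pbar)
    (α : ℂ) (τ : ℝ) (hτ : 0 < τ) (ν : Fin M → ℝ)
    (hν : ∀ m, ν m = δ m * ((‖α‖ ^ 2 * P m / Pbar + τ) / (‖α‖ ^ 2 + τ))) :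
    ∑ m, δ m * Real.log (1 + ‖α‖ ^ 2 * P m / (τ * Pbar)) =
      Real.log (1 + ‖α‖ ^ 2 / τ) - ∑ m, δ m * Real.log (δ m / ν m) := by
  set a := ‖α‖ ^ 2
  set x : Fin M → ℝ := fun m => a * P m / Pbar + τ
  have hx : ∀ m, x m ≠ 0 := fun m => by have := hP m; positivity
  have hrate : ∀ m, 1 + a * P m / (τ * Pbar) = x m / τ := fun m => by
    rw [add_div, div_self hτ.ne', div_div, mul_comm Pbar, add_comm]
  have hratio : ∀ m, δ m / ν m = (a + τ) / x m := fun m => by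
    rw [hν m, div_mul_cancel_left₀ (hδ m).ne', inv_div]
  have hflat : 1 + a / τ = (a + τ) / τ := by
    rw [add_div, div_self hτ.ne', add_comm]
  simp_rw [hrate, hratio, hflat]
  exact sum_mul_log_div_eq hδsum hx (by positivity) hτ.ne'

/-- The noise-free linear achievable rate equals the flat-allocation rate
minus the KL divergence `D(δ‖ν)` between the bandwidth fractions and the
transmitted power fractions. -/
theorem rate_no_noise (M : ℕ) (δ : Fin M → ℝ) (hδ : ∀ m, 0 < δ m)
    (hδsum : ∑ m, δ m = 1) (P : Fin M → ℝ) (hP : ∀ m, 0 ≤ P m)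
    (Pbar : ℝ) (hPbar : Pbar = ∑ m, δ m * P m) (hPbar_pos : 0 < Pbar)
    (α : ℂ) (τ : ℝ) (hτ : 0 < τ) (ν : Fin M → ℝ)
    (hν : ∀ m, ν m = δ m * ((‖α‖ ^ 2 * P m / Pbar + τ) / (‖α‖ ^ 2 + τ))) :
    ∑ m, δ m * Real.log (1 + ‖α‖ ^ 2 * P m / (τ * Pbar)) =
      Real.log (1 + ‖α‖ ^ 2 / τ) - ∑ m, δ m * Real.log (δ m / ν m) :=
  rate_no_noise_general M δ hδ hδsum P hP Pbar hPbar_pos α τ hτ ν hν
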